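/- Let K ⊆ ℂ^p be a determining compact set and let (ξ_j)_{j≥0} be a pseudo Leja sequence for K with Edrei growth (M_j)_{j≥1}. Then for every k ≥ 1, (∏_{j=1}^{k−1} M_j)·|vdm(ξ_0,…,ξ_{k−1})| ≥ ∏_{j=1}^{k−1} θ_j(K), where θ_j(K) = inf{ max_{z∈K} |e_j(z) + ∑_{i=0}^{j−1} c_i e_i(z)| : c_0,…,c_{j−1} ∈ ℂ }. In particular, V_{h_d}(K) ≥ |vdm(ξ_0,…,ξ_{h_d−1})| ≥ (∏_{j=1}^{h_d−1} M_j)^{−1}·∏_{j=1}^{h_d−1} θ_j(K) for every d ≥ 1. -/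

import Mathlib

open scoped BigOperators
open Filter

namespace PseudoLeja

/-- Graded lexicographic strict order on multi-indices in `ℕ^p`:
`α ≺ β` iff `|α| < |β|`, or `|α| = |β|` and the leftmost nonzero entry of `α - β`
is negative (i.e. at the first index where they differ, `α` is smaller). -/
def GLexLT {p : ℕ} (α β : Fin p → ℕ) : Prop :=
  (∑ i, α i) < (∑ i, β i) ∨
    ((∑ i, α i) = (∑ i, β i) ∧ ∃ k, (∀ i, i < k → α i = β i) ∧ α k < β k)

/-- `κ : ℕ → ℕ^p` is the (unique) enumeration of all multi-indices that is strictly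
increasing from the usual order on `ℕ` to the graded lexicographic order. -/
def IsGLexEnum {p : ℕ} (κ : ℕ → Fin p → ℕ) : Prop :=
  Function.Bijective κ ∧ ∀ m n : ℕ, m < n → GLexLT (κ m) (κ n)

/-- The `N`-th monomial `e_N(z) = z^{κ(N)}`. -/
noncomputable def mono {p : ℕ} (κ : ℕ → Fin p → ℕ) (N : ℕ) (z : Fin p → ℂ) : ℂ :=
  ∏ i, z i ^ κ N i

/-- Vandermonde determinant of the points `ξ 0, …, ξ (n-1)`:
`vdm κ n ξ = det [e_N(ξ_M)]_{0 ≤ M, N ≤ n-1}`. -/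
noncomputable def vdm {p : ℕ} (κ : ℕ → Fin p → ℕ) (n : ℕ) (ξ : ℕ → Fin p → ℂ) : ℂ :=
  Matrix.det (Matrix.of fun M N : Fin n => mono κ (N : ℕ) (ξ (M : ℕ)))

/-- A set `K ⊆ ℂ^p` is determining if no nonzero polynomial in `p` complex
variables vanishes identically on `K`. -/
def Determining {p : ℕ} (K : Set (Fin p → ℂ)) : Prop :=
  ∀ P : MvPolynomial (Fin p) ℂ, (∀ z ∈ K, MvPolynomial.eval z P = 0) → P = 0

/-- `h_d = C(p+d, d)`, the dimension of the space of polynomials of total degree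
at most `d` in `p` variables. -/
def hdim (p d : ℕ) : ℕ := Nat.choose (p + d) d

/-- `l_d = p·C(p+d, p+1)`, the degree of the Vandermonde determinant of `h_d` points. -/
def ldim (p d : ℕ) : ℕ := p * Nat.choose (p + d) (p + 1)

/-- `V_j(K)`, the maximal modulus of the Vandermonde determinant of `j` points of `K`. -/
noncomputable def Vsup {p : ℕ} (κ : ℕ → Fin p → ℕ) (K : Set (Fin p → ℂ)) (j : ℕ) : ℝ :=
  sSup { v : ℝ | ∃ ξ : ℕ → Fin p → ℂ, (∀ i, ξ i ∈ K) ∧ v = ‖vdm κ j ξ‖ }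

/-- `(ξ_j)_{j≥0} ⊆ K` is a pseudo Leja sequence for `K` with Edrei growth `(M_j)_{j≥1}`:
`M_j ≥ 1`, `M_j·|vdm(ξ_0,…,ξ_j)| ≥ max_{z∈K} |vdm(ξ_0,…,ξ_{j-1},z)|` for `j ≥ 1`, and
`lim_{d→∞} (max_{h_{d-1} ≤ j < h_d} M_j)^{1/d} = 1`. -/
def IsPseudoLeja {p : ℕ} (κ : ℕ → Fin p → ℕ) (K : Set (Fin p → ℂ))
    (ξ : ℕ → Fin p → ℂ) (M : ℕ → ℝ) : Prop :=
  (∀ j, ξ j ∈ K) ∧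
  (∀ j, 1 ≤ j → 1 ≤ M j) ∧
  (∀ j, 1 ≤ j → ∀ z ∈ K,
    ‖vdm κ (j + 1) (Function.update ξ j z)‖ ≤
      M j * ‖vdm κ (j + 1) ξ‖) ∧
  Filter.Tendsto
    (fun d : ℕ => (sSup (M '' Set.Ico (hdim p (d - 1)) (hdim p d))) ^ ((d : ℝ)⁻¹))
    Filter.atTop (nhds 1)

/-- `θ_j(K) = inf { max_{z∈K} |e_j(z) + ∑_{i<j} c_i e_i(z)| : c_0,…,c_{j-1} ∈ ℂ }`,
the `|κ(j)|`-th power of the `j`-th Chebyshev constant of `K`. -/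
noncomputable def cheb {p : ℕ} (κ : ℕ → Fin p → ℕ) (K : Set (Fin p → ℂ)) (j : ℕ) : ℝ :=
  sInf { r : ℝ | ∃ c : ℕ → ℂ,
    r = sSup { s : ℝ | ∃ z ∈ K,
      s = ‖mono κ j z + ∑ i ∈ Finset.range j, c i * mono κ i z‖ } }

/-!
Expanding `vdm(ξ_0, …, ξ_{k-1}, z)` along its last row writes it as `vdm(ξ_0, …, ξ_{k-1})`
times a polynomial `e_k + ∑_{i<k} c_i e_i` in `z`. Hence `θ_k(K) · |vdm(ξ_0, …, ξ_{k-1})|` is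
at most `max_{z ∈ K} |vdm(ξ_0, …, ξ_{k-1}, z)| ≤ M_k |vdm(ξ_0, …, ξ_k)|`, and multiplying these
inequalities from `vdm(ξ_0) = 1` upwards gives the bound.
-/

theorem GLexLT.not_lt_zero {p : ℕ} (α : Fin p → ℕ) : ¬ GLexLT α 0 := by
  rintro (h | ⟨-, k, -, hk⟩)
  · simp at h
  · simp at hk

theorem IsGLexEnum.apply_zero {p : ℕ} {κ : ℕ → Fin p → ℕ} (hκ : IsGLexEnum κ) : κ 0 = 0 := by
  obtain ⟨m, hm⟩ := hκ.1.2 0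
  obtain rfl | hm0 := Nat.eq_zero_or_pos m
  · exact hm
  · exact absurd (hm ▸ hκ.2 0 m hm0) (GLexLT.not_lt_zero _)

theorem vdm_one {p : ℕ} {κ : ℕ → Fin p → ℕ} (hκ : IsGLexEnum κ) (ξ : ℕ → Fin p → ℂ) :
    vdm κ 1 ξ = 1 := by
  simp [vdm, mono, hκ.apply_zero]

theorem continuous_mono {p : ℕ} (κ : ℕ → Fin p → ℕ) (N : ℕ) : Continuous (mono κ N) := by
  unfold mono
  fun_prop

theorem bddAbove_norm_vdm {p : ℕ} (κ : ℕ → Fin p → ℕ) {K : Set (Fin p → ℂ)} (hK : IsCompact K)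
    (n : ℕ) : BddAbove {v : ℝ | ∃ ξ : ℕ → Fin p → ℂ, (∀ i, ξ i ∈ K) ∧ v = ‖vdm κ n ξ‖} := by
  have hcont : Continuous fun η : Fin n → Fin p → ℂ =>
      ‖(Matrix.of fun M N : Fin n => mono κ N (η M)).det‖ :=
    (Continuous.matrix_det (continuous_matrix fun (M N : Fin n) =>
      (continuous_mono κ (N : ℕ)).comp (continuous_apply M))).norm
  refine ((isCompact_univ_pi fun _ => hK).bddAbove_image hcont.continuousOn).mono ?_
  rintro v ⟨ξ, hξ, rfl⟩
  exact ⟨fun M => ξ M, fun M _ => hξ M, rfl⟩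

/-- Laplace expansion of `vdm(ξ_0, …, ξ_{k-1}, z)` along its last row; the `i`-th minor
deletes the column of `e_i`. -/
theorem vdm_succ_update_eq_sum {p : ℕ} (κ : ℕ → Fin p → ℕ) (ξ : ℕ → Fin p → ℂ) (k : ℕ)
    (z : Fin p → ℂ) :
    vdm κ (k + 1) (Function.update ξ k z) =
      ∑ i ∈ Finset.range (k + 1), (-1) ^ (k + i) * mono κ i z *
        (Matrix.of fun M N : Fin k => mono κ (if (N : ℕ) < i then N else N + 1) (ξ M)).det := by
  rw [vdm, Matrix.det_succ_row _ (Fin.last k), ← Fin.sum_univ_eq_sum_range]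
  refine Finset.sum_congr rfl fun j _ => ?_
  congr 2
  · simp
  · ext M N
    simp only [Matrix.submatrix_apply, Matrix.of_apply, Fin.succAbove_last, Fin.val_castSucc,
      Function.update_of_ne M.isLt.ne]
    congr 2
    simp only [Fin.succAbove, Fin.lt_def, Fin.val_castSucc]
    split_ifs <;> simp

theorem exists_vdm_succ_update_eq {p : ℕ} (κ : ℕ → Fin p → ℕ) (ξ : ℕ → Fin p → ℂ) (k : ℕ) :
    ∃ b : ℕ → ℂ, ∀ z, vdm κ (k + 1) (Function.update ξ k z) =
      vdm κ k ξ * mono κ k z + ∑ i ∈ Finset.range k, b i * mono κ i z := by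
  refine ⟨fun i => (-1) ^ (k + i) *
    (Matrix.of fun M N : Fin k => mono κ (if (N : ℕ) < i then N else N + 1) (ξ M)).det, fun z => ?_⟩
  rw [vdm_succ_update_eq_sum, Finset.sum_range_succ, add_comm]
  congr 1
  · simp [vdm, mul_comm]
  · exact Finset.sum_congr rfl fun i _ => mul_right_comm _ _ _

theorem cheb_nonneg {p : ℕ} (κ : ℕ → Fin p → ℕ) (K : Set (Fin p → ℂ)) (j : ℕ) :
    0 ≤ cheb κ K j :=
  Real.sInf_nonneg fun _ ⟨_, hr⟩ => hr ▸ Real.sSup_nonneg fun _ ⟨_, _, hs⟩ => hs ▸ norm_nonneg _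

theorem cheb_le_of_forall_norm_le {p : ℕ} {κ : ℕ → Fin p → ℕ} {K : Set (Fin p → ℂ)} {j : ℕ}
    (c : ℕ → ℂ) {R : ℝ} (hR : 0 ≤ R)
    (h : ∀ z ∈ K, ‖mono κ j z + ∑ i ∈ Finset.range j, c i * mono κ i z‖ ≤ R) :
    cheb κ K j ≤ R := by
  refine csInf_le_of_le ⟨0, fun _ ⟨_, hr⟩ => hr ▸ Real.sSup_nonneg ?_⟩ ⟨c, rfl⟩ ?_
  · rintro _ ⟨_, _, rfl⟩
    exact norm_nonneg _
  · exact Real.sSup_le (fun _ ⟨z, hz, hs⟩ => hs ▸ h z hz) hR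

theorem cheb_mul_norm_vdm_le {p : ℕ} (κ : ℕ → Fin p → ℕ) {K : Set (Fin p → ℂ)}
    (ξ : ℕ → Fin p → ℂ) (k : ℕ) {R : ℝ} (hR : 0 ≤ R)
    (h : ∀ z ∈ K, ‖vdm κ (k + 1) (Function.update ξ k z)‖ ≤ R) :
    cheb κ K k * ‖vdm κ k ξ‖ ≤ R := by
  obtain ⟨b, hb⟩ := exists_vdm_succ_update_eq κ ξ k
  rcases eq_or_ne (vdm κ k ξ) 0 with hD | hD
  · simpa [hD] using hR
  have hpos : 0 < ‖vdm κ k ξ‖ := norm_pos_iff.2 hD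
  rw [← le_div_iff₀ hpos]
  refine cheb_le_of_forall_norm_le (fun i => b i / vdm κ k ξ) (div_nonneg hR hpos.le)
    fun z hz => ?_
  rw [le_div_iff₀ hpos, ← norm_mul]
  refine (congrArg norm ?_).le.trans (h z hz)
  rw [hb, add_mul, Finset.sum_mul, mul_comm]
  congr 1
  exact Finset.sum_congr rfl fun i _ => by field_simp

theorem prod_cheb_le_prod_mul_norm_vdm {p : ℕ} {κ : ℕ → Fin p → ℕ} (hκ : IsGLexEnum κ)
    {K : Set (Fin p → ℂ)} {ξ : ℕ → Fin p → ℂ} {M : ℕ → ℝ} (hM : ∀ j, 1 ≤ j → 0 ≤ M j)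
    (hstep : ∀ j, 1 ≤ j → ∀ z ∈ K,
      ‖vdm κ (j + 1) (Function.update ξ j z)‖ ≤ M j * ‖vdm κ (j + 1) ξ‖)
    {k : ℕ} (hk : 1 ≤ k) :
    ∏ j ∈ Finset.Ico 1 k, cheb κ K j ≤ (∏ j ∈ Finset.Ico 1 k, M j) * ‖vdm κ k ξ‖ := by
  induction k, hk using Nat.le_induction with
  | base => simp [vdm_one hκ]
  | succ k hk ih =>
    have hprodM : 0 ≤ ∏ j ∈ Finset.Ico 1 k, M j :=
      Finset.prod_nonneg fun j hj => hM j (Finset.mem_Ico.1 hj).1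
    have hnext : cheb κ K k * ‖vdm κ k ξ‖ ≤ M k * ‖vdm κ (k + 1) ξ‖ :=
      cheb_mul_norm_vdm_le κ ξ k (mul_nonneg (hM k hk) (norm_nonneg _)) (hstep k hk)
    rw [Finset.prod_Ico_succ_top hk, Finset.prod_Ico_succ_top hk]
    calc (∏ j ∈ Finset.Ico 1 k, cheb κ K j) * cheb κ K k
        ≤ (∏ j ∈ Finset.Ico 1 k, M j) * ‖vdm κ k ξ‖ * cheb κ K k :=
          mul_le_mul_of_nonneg_right ih (cheb_nonneg κ K k)
      _ = (∏ j ∈ Finset.Ico 1 k, M j) * (cheb κ K k * ‖vdm κ k ξ‖) := by ring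
      _ ≤ (∏ j ∈ Finset.Ico 1 k, M j) * (M k * ‖vdm κ (k + 1) ξ‖) :=
          mul_le_mul_of_nonneg_left hnext hprodM
      _ = (∏ j ∈ Finset.Ico 1 k, M j) * M k * ‖vdm κ (k + 1) ξ‖ := by ring

theorem pseudoLeja_vdm_lower_bound_general {p : ℕ}
    (κ : ℕ → Fin p → ℕ) (hκ : IsGLexEnum κ)
    (K : Set (Fin p → ℂ)) (hKc : IsCompact K)
    (ξ : ℕ → Fin p → ℂ) (M : ℕ → ℝ) (hPL : IsPseudoLeja κ K ξ M) :
    (∀ k : ℕ, 1 ≤ k →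
      ∏ j ∈ Finset.Ico 1 k, cheb κ K j ≤
        (∏ j ∈ Finset.Ico 1 k, M j) * ‖vdm κ k ξ‖) ∧
    (∀ d : ℕ, 1 ≤ d →
      ‖vdm κ (hdim p d) ξ‖ ≤ Vsup κ K (hdim p d) ∧
      (∏ j ∈ Finset.Ico 1 (hdim p d), M j)⁻¹ *
          ∏ j ∈ Finset.Ico 1 (hdim p d), cheb κ K j ≤
        ‖vdm κ (hdim p d) ξ‖) := by
  obtain ⟨hξK, hM1, hstep, -⟩ := hPL
  have hM : ∀ j, 1 ≤ j → 0 ≤ M j := fun j hj => zero_le_one.trans (hM1 j hj)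
  have hbound := fun k (hk : 1 ≤ k) => prod_cheb_le_prod_mul_norm_vdm hκ hM hstep hk
  refine ⟨hbound, fun d _ => ⟨le_csSup (bddAbove_norm_vdm κ hKc _) ⟨ξ, hξK, rfl⟩, ?_⟩⟩
  have hprodM : 0 ≤ ∏ j ∈ Finset.Ico 1 (hdim p d), M j :=
    Finset.prod_nonneg fun j hj => hM j (Finset.mem_Ico.1 hj).1
  exact inv_mul_le_of_le_mul₀ hprodM (norm_nonneg _)
    (hbound _ (Nat.choose_pos (Nat.le_add_left d p)))

/-- for a pseudo Leja sequence,
`(∏_{j=1}^{k-1} M_j)·|vdm(ξ_0,…,ξ_{k-1})| ≥ ∏_{j=1}^{k-1} θ_j(K)` for every `k ≥ 1`;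
in particular `V_{h_d}(K) ≥ |vdm(ξ_0,…,ξ_{h_d-1})| ≥ (∏_{j=1}^{h_d-1} M_j)⁻¹·∏_{j=1}^{h_d-1} θ_j(K)`
for every `d ≥ 1`. -/
theorem pseudoLeja_vdm_lower_bound {p : ℕ} (hp : 1 ≤ p)
    (κ : ℕ → Fin p → ℕ) (hκ : IsGLexEnum κ)
    (K : Set (Fin p → ℂ)) (hKc : IsCompact K) (hKd : Determining K)
    (ξ : ℕ → Fin p → ℂ) (M : ℕ → ℝ) (hPL : IsPseudoLeja κ K ξ M) :
    (∀ k : ℕ, 1 ≤ k →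
      ∏ j ∈ Finset.Ico 1 k, cheb κ K j ≤
        (∏ j ∈ Finset.Ico 1 k, M j) * ‖vdm κ k ξ‖) ∧
    (∀ d : ℕ, 1 ≤ d →
      ‖vdm κ (hdim p d) ξ‖ ≤ Vsup κ K (hdim p d) ∧
      (∏ j ∈ Finset.Ico 1 (hdim p d), M j)⁻¹ *
          ∏ j ∈ Finset.Ico 1 (hdim p d), cheb κ K j ≤
        ‖vdm κ (hdim p d) ξ‖) :=
  pseudoLeja_vdm_lower_bound_general κ hκ K hKc ξ M hPL

end PseudoLeja
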